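/- arXiv:2410.22238 — 3 statements merged into one kernel-verified Lean document; each statement's English description precedes it below -/
import Mathlib

section
/- Let $(a_n)_{n\ge1}$ and $(b_n)_{n\ge1}$ be nondecreasing real sequences with $a_n\to\infty$ and $b_n\to\infty$. Suppose there exist $\alpha>0$, $C>0$ with $a_n = Cn^{\alpha}+o(n^{\alpha})$ and $b_n = Cn^{\alpha}+o(n^{\alpha})$ as $n\to\infty$, and there is $E\in\mathbb{R}$ with $\frac{1}{N}\sum_{n=1}^N (b_n-a_n)\to E$ as $N\to\infty$. Then $\sum_{n\ge1}(a_n-\lambda)_- - \sum_{n\ge1}(b_n-\lambda)_- = C^{-1/\alpha}E\,\lambda^{1/\alpha} + o(\lambda^{1/\alpha})$ as $\lambda\to\infty$. -/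
/-!
Let `N_a(λ)` be the number of `n` with `a_n < λ`. By monotonicity `∑ (a_n - λ)_-` is the
partial sum of `λ - a_n` up to `N_a(λ)`, and it is the largest partial sum of `λ - a_n`.
Comparing both sums at `N_a(λ)` and at `N_b(λ)` traps their difference between `T(N_b(λ))` and
`T(N_a(λ))`, where `T(N) = ∑_{n ≤ N} (b_n - a_n) = E N + o(N)`. Inverting `a_n ~ C n^α`
(squeezing `λ` between `a_{N_a}` and `a_{N_a + 1}`) gives `N_a(λ) ~ C^{-1/α} λ^{1/α}`, and
likewise for `b`, so both bounds are `C^{-1/α} E λ^{1/α} + o(λ^{1/α})`.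
-/

open Filter Finset Asymptotics Topology

section

variable {ι : Type*} {l : Filter ι} {u v w g : ι → ℝ}

theorem Asymptotics.IsLittleO.of_le_of_le (hu : u =o[l] g) (hv : v =o[l] g)
    (huw : u ≤ᶠ[l] w) (hwv : w ≤ᶠ[l] v) : w =o[l] g := by
  refine IsBigO.trans_isLittleO ?_ (hu.norm_left.add hv.norm_left)
  refine IsBigO.of_norm_eventuallyLE ?_
  filter_upwards [huw, hwv] with x h₁ h₂
  simp only [Real.norm_eq_abs]
  exact abs_le.2 ⟨by linarith [neg_abs_le (u x), abs_nonneg (v x)],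
    by linarith [le_abs_self (v x), abs_nonneg (u x)]⟩

theorem Asymptotics.IsEquivalent.of_le_of_le (hu : u ~[l] g) (hv : v ~[l] g)
    (huw : u ≤ᶠ[l] w) (hwv : w ≤ᶠ[l] v) : w ~[l] g :=
  hu.isLittleO.of_le_of_le hv.isLittleO (huw.mono fun _ h => sub_le_sub_right h _)
    (hwv.mono fun _ h => sub_le_sub_right h _)

end

theorem isEquivalent_const_mul_natCast_add_one_rpow (C α : ℝ) :
    (fun n : ℕ => C * ((n : ℝ) + 1) ^ α) ~[atTop] fun n => C * (n : ℝ) ^ α := by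
  have h : (fun n : ℕ => (n : ℝ) + 1) ~[atTop] fun n => (n : ℝ) :=
    IsEquivalent.refl.add_isLittleO
      ((isLittleO_const_id_atTop (1 : ℝ)).comp_tendsto tendsto_natCast_atTop_atTop)
  exact IsEquivalent.refl.mul (h.rpow fun n => Nat.cast_nonneg n)

theorem isLittleO_sub_mul_of_tendsto_div {u : ℕ → ℝ} {E : ℝ}
    (h : Tendsto (fun N => u N / N) atTop (𝓝 E)) :
    (fun N => u N - E * N) =o[atTop] fun N : ℕ => (N : ℝ) := by
  have hN : ∀ᶠ N : ℕ in atTop, (N : ℝ) ≠ 0 :=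
    (eventually_ne_atTop 0).mono fun N hN => Nat.cast_ne_zero.2 hN
  rw [isLittleO_iff_tendsto' (hN.mono fun N hN h => absurd h hN)]
  refine (h.sub_const E).congr' ?_ |>.trans (by rw [sub_self])
  filter_upwards [hN] with N hN
  field_simp

/-- For monotone `f`, the number of indices `n` with `f n < lam`; it is `0` if `f` never
reaches `lam`. -/
noncomputable def countBelow (f : ℕ → ℝ) (lam : ℝ) : ℕ :=
  sInf {n | lam ≤ f n}

section countBelow

variable {f g : ℕ → ℝ}

theorem le_apply_countBelow (hfTop : Tendsto f atTop atTop) (lam : ℝ) :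
    lam ≤ f (countBelow f lam) :=
  Nat.sInf_mem (hfTop.eventually_ge_atTop lam).exists

theorem apply_lt_of_lt_countBelow {lam : ℝ} {n : ℕ} (hn : n < countBelow f lam) : f n < lam :=
  lt_of_not_ge (Nat.notMem_of_lt_sInf hn)

theorem tendsto_countBelow (hf : Monotone f) (hfTop : Tendsto f atTop atTop) :
    Tendsto (countBelow f) atTop atTop := by
  refine tendsto_atTop.2 fun N => ?_
  filter_upwards [eventually_gt_atTop (f N)] with lam hlam
  by_contra! h
  exact (hlam.trans_le (le_apply_countBelow hfTop lam)).not_ge (hf h.le)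

theorem hasSum_max_sub_countBelow (hf : Monotone f) (hfTop : Tendsto f atTop atTop) (lam : ℝ) :
    HasSum (fun n => max 0 (lam - f n)) (∑ n ∈ range (countBelow f lam), (lam - f n)) := by
  have hpos : ∀ n ∈ range (countBelow f lam), max 0 (lam - f n) = lam - f n := fun n hn =>
    max_eq_right (sub_nonneg.2 (apply_lt_of_lt_countBelow (mem_range.1 hn)).le)
  rw [← sum_congr rfl hpos]
  refine hasSum_sum_of_ne_finset_zero fun n hn => max_eq_left (sub_nonpos.2 ?_)
  exact (le_apply_countBelow hfTop lam).trans (hf (not_lt.1 (mt mem_range.2 hn)))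

theorem sum_range_sub_le_tsum_max_sub (hf : Monotone f) (hfTop : Tendsto f atTop atTop)
    (lam : ℝ) (N : ℕ) : ∑ n ∈ range N, (lam - f n) ≤ ∑' n, max 0 (lam - f n) :=
  (sum_le_sum fun _ _ => le_max_right _ _).trans <|
    (hasSum_max_sub_countBelow hf hfTop lam).summable.sum_le_tsum _ fun _ _ => le_max_left _ _

theorem tsum_max_sub_sub_tsum_max_sub_mem_Icc (hf : Monotone f) (hfTop : Tendsto f atTop atTop)
    (hg : Monotone g) (hgTop : Tendsto g atTop atTop) (lam : ℝ) :
    (∑' n, max 0 (lam - f n)) - ∑' n, max 0 (lam - g n) ∈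
      Set.Icc (∑ n ∈ range (countBelow g lam), (g n - f n))
        (∑ n ∈ range (countBelow f lam), (g n - f n)) := by
  have hf' := sum_range_sub_le_tsum_max_sub hf hfTop lam (countBelow g lam)
  have hg' := sum_range_sub_le_tsum_max_sub hg hgTop lam (countBelow f lam)
  rw [(hasSum_max_sub_countBelow hf hfTop lam).tsum_eq] at hf' ⊢
  rw [(hasSum_max_sub_countBelow hg hgTop lam).tsum_eq] at hg' ⊢
  simp only [sum_sub_distrib] at hf' hg' ⊢
  constructor <;> linarith

theorem isEquivalent_countBelow (hf : Monotone f) (hfTop : Tendsto f atTop atTop)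
    {α C : ℝ} (hα : 0 < α) (hC : 0 < C) (h : f ~[atTop] fun n => C * (n : ℝ) ^ α) :
    (fun lam => (countBelow f lam : ℝ)) ~[atTop] fun lam => C ^ (-(1 / α)) * lam ^ (1 / α) := by
  set K := countBelow f
  have hK := tendsto_countBelow hf hfTop
  have hupper : (fun lam => f (K lam)) ~[atTop] fun lam => C * (K lam : ℝ) ^ α :=
    h.comp_tendsto hK
  have hlower : (fun lam => f (K lam - 1)) ~[atTop] fun lam => C * (K lam : ℝ) ^ α := by
    refine ((h.trans (isEquivalent_const_mul_natCast_add_one_rpow C α).symm).comp_tendsto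
      ((tendsto_sub_atTop_nat 1).comp hK)).congr_right ?_
    filter_upwards [hK.eventually_ge_atTop 1] with lam hlam
    simp [K, Nat.cast_sub hlam]
  have hlam : (fun lam => lam) ~[atTop] fun lam => C * (K lam : ℝ) ^ α := by
    refine hlower.of_le_of_le hupper ?_ (Eventually.of_forall (le_apply_countBelow hfTop))
    filter_upwards [hK.eventually_ge_atTop 1] with lam hlam
    exact (apply_lt_of_lt_countBelow (Nat.sub_lt hlam one_pos)).le
  have hroot := (IsEquivalent.refl (u := fun _ => C ^ (-(1 / α)))).mul
    (hlam.rpow (fun lam => mul_nonneg hC.le (Real.rpow_nonneg (Nat.cast_nonneg _) _))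
      (r := 1 / α))
  refine (hroot.symm.congr_left (Eventually.of_forall fun lam => ?_)).congr_right
    (Eventually.of_forall fun _ => rfl)
  simp only [Pi.mul_apply, Pi.pow_apply]
  rw [Real.mul_rpow hC.le (by positivity), one_div, Real.rpow_rpow_inv (by positivity) hα.ne',
    Real.rpow_neg hC.le, inv_mul_cancel_left₀ (by positivity)]

end countBelow

theorem isEquivalent_comp_add_one {u : ℕ → ℝ} {α C : ℝ}
    (h : u ~[atTop] fun n => C * (n : ℝ) ^ α) :
    (fun n => u (n + 1)) ~[atTop] fun n => C * (n : ℝ) ^ α := by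
  refine IsEquivalent.trans ?_ (isEquivalent_const_mul_natCast_add_one_rpow C α)
  simpa only [Function.comp_def, Nat.cast_add, Nat.cast_one] using
    h.comp_tendsto (tendsto_add_atTop_nat 1)

theorem isLittleO_comp_sub_of_isEquivalent {β : Type*} {l : Filter β} {u : ℕ → ℝ} {E c : ℝ}
    {p : β → ℝ} {K : β → ℕ} (hu : (fun N => u N - E * N) =o[atTop] fun N : ℕ => (N : ℝ))
    (hK : Tendsto K l atTop) (hKp : (fun x => (K x : ℝ)) ~[l] fun x => c * p x) :
    (fun x => u (K x) - c * E * p x) =o[l] p := by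
  have hcp : (fun x => c * p x) =O[l] p := isBigO_const_mul_self c p l
  have h₁ := (hu.comp_tendsto hK).trans_isBigO (hKp.isBigO.trans hcp)
  have h₂ := (hKp.isLittleO.trans_isBigO hcp).const_mul_left E
  refine (h₁.add h₂).congr_left fun x => ?_
  simp only [Function.comp_apply, Pi.sub_apply]
  ring

theorem stmt_1 (a b : ℕ → ℝ) (ha : Monotone a) (hb : Monotone b)
    (haTop : Tendsto a atTop atTop) (hbTop : Tendsto b atTop atTop)
    (α C E : ℝ) (hα : 0 < α) (hC : 0 < C)
    (haAsym : (fun n : ℕ => a n - C * (n : ℝ) ^ α) =o[atTop] fun n : ℕ => (n : ℝ) ^ α)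
    (hbAsym : (fun n : ℕ => b n - C * (n : ℝ) ^ α) =o[atTop] fun n : ℕ => (n : ℝ) ^ α)
    (hCesaro : Tendsto (fun N : ℕ => (∑ n ∈ Finset.Icc 1 N, (b n - a n)) / N) atTop (nhds E)) :
    (fun lam : ℝ =>
        (∑' n : ℕ, max 0 (lam - a (n + 1))) - (∑' n : ℕ, max 0 (lam - b (n + 1)))
          - C ^ (-(1 / α)) * E * lam ^ (1 / α)) =o[atTop] fun lam : ℝ => lam ^ (1 / α) := by
  have hf : Monotone fun n => a (n + 1) := ha.comp fun _ _ h => Nat.add_le_add_right h 1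
  have hg : Monotone fun n => b (n + 1) := hb.comp fun _ _ h => Nat.add_le_add_right h 1
  have hfTop := haTop.comp (tendsto_add_atTop_nat 1)
  have hgTop := hbTop.comp (tendsto_add_atTop_nat 1)
  have hfK := isEquivalent_countBelow hf hfTop hα hC <| isEquivalent_comp_add_one <|
    (isLittleO_const_mul_right_iff hC.ne').2 haAsym
  have hgK := isEquivalent_countBelow hg hgTop hα hC <| isEquivalent_comp_add_one <|
    (isLittleO_const_mul_right_iff hC.ne').2 hbAsym
  have hT := isLittleO_sub_mul_of_tendsto_div
    (u := fun N => ∑ n ∈ range N, (b (n + 1) - a (n + 1)))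
    (by simpa only [range_eq_Ico, sum_Ico_add' (fun n => b n - a n),
      ← Ico_add_one_right_eq_Icc] using hCesaro)
  refine IsLittleO.of_le_of_le
    (isLittleO_comp_sub_of_isEquivalent hT (tendsto_countBelow hg hgTop) hgK)
    (isLittleO_comp_sub_of_isEquivalent hT (tendsto_countBelow hf hfTop) hfK)
    (Eventually.of_forall fun lam => sub_le_sub_right
      (tsum_max_sub_sub_tsum_max_sub_mem_Icc hf hfTop hg hgTop lam).1 _)
    (Eventually.of_forall fun lam => sub_le_sub_right
      (tsum_max_sub_sub_tsum_max_sub_mem_Icc hf hfTop hg hgTop lam).2 _)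
end

section
/- Let $(a_n)_{n\ge1}$ be a nondecreasing real sequence with $a_n = Cn^{\alpha}+o(n^{\alpha})$ as $n\to\infty$ for some constants $C>0$ and $\alpha>0$. Then $\sum_{n\ge1}(a_n-\lambda)_- = \frac{\alpha}{1+\alpha}\,C^{-1/\alpha}\,\lambda^{1+1/\alpha} + o(\lambda^{1+1/\alpha})$ as $\lambda\to\infty$. -/
/-!
For the model sequence `c (n + 1) ^ α` the sum `∑ (lam - c (n + 1) ^ α)₊` is a Riemann sum of the
antitone function `x ↦ (lam - c x ^ α)₊`, whose integral over `[0, ∞)` is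
`α / (1 + α) c ^ (-1 / α) lam ^ (1 + 1 / α)`; the two Riemann-sum inequalities pin the model sum
down to within `lam`. For any `c < C < c'` the hypothesis puts `a (n + 1)` between `c (n + 1) ^ α`
and `c' (n + 1) ^ α` for all large `n`, and the finitely many remaining terms contribute only
`O(lam)`. Letting `c, c' → C` gives the asymptotics.
-/

open Filter Asymptotics Real Finset

noncomputable def rieszSum (u : ℕ → ℝ) (lam : ℝ) : ℝ := ∑' n, max 0 (lam - u n)

section ModelSum

variable {α c lam : ℝ}

lemma max_zero_sub_mul_rpow_eq_zero (hα : 0 < α) (hc : 0 < c) (hlam : 0 ≤ lam) {x : ℝ}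
    (hx : (lam / c) ^ (1 / α) ≤ x) : max 0 (lam - c * x ^ α) = 0 := by
  have hlc : lam / c ≤ x ^ α := by
    simpa [← rpow_mul (div_nonneg hlam hc.le), hα.ne'] using
      rpow_le_rpow (by positivity) hx hα.le
  rw [div_le_iff₀' hc] at hlc
  exact max_eq_left (by linarith)

lemma antitoneOn_max_zero_sub_mul_rpow (hα : 0 ≤ α) (hc : 0 ≤ c) :
    AntitoneOn (fun x : ℝ => max 0 (lam - c * x ^ α)) (Set.Ici 0) := fun _ hx _ _ hxy =>
  max_le_max le_rfl (sub_le_sub_left (mul_le_mul_of_nonneg_left (rpow_le_rpow hx hxy hα) hc) _)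

lemma integral_max_zero_sub_mul_rpow (hα : 0 < α) (hc : 0 < c) (hlam : 0 < lam) {M : ℝ}
    (hM : (lam / c) ^ (1 / α) ≤ M) :
    ∫ x in (0 : ℝ)..M, max 0 (lam - c * x ^ α)
      = α / (1 + α) * c ^ (-(1 / α)) * lam ^ (1 + 1 / α) := by
  set R := (lam / c) ^ (1 / α) with hR_def
  have hR : 0 ≤ R := by positivity
  have hRα : R ^ α = lam / c := by
    rw [← rpow_mul (by positivity), one_div_mul_cancel hα.ne', rpow_one]
  have hcont : Continuous fun x : ℝ => max 0 (lam - c * x ^ α) := by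
    have := continuous_rpow_const (q := α) hα.le
    fun_prop
  have h_tail : ∫ x in R..M, max 0 (lam - c * x ^ α) = 0 := by
    refine (intervalIntegral.integral_congr fun x hx => ?_).trans intervalIntegral.integral_zero
    rw [Set.uIcc_of_le hM] at hx
    exact max_zero_sub_mul_rpow_eq_zero hα hc hlam.le hx.1
  have h_head :
      ∫ x in (0 : ℝ)..R, max 0 (lam - c * x ^ α) = ∫ x in (0 : ℝ)..R, (lam - c * x ^ α) := by
    refine intervalIntegral.integral_congr fun x hx => ?_
    rw [Set.uIcc_of_le hR] at hx
    have : x ^ α ≤ lam / c := hRα ▸ rpow_le_rpow hx.1 hx.2 hα.le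
    rw [le_div_iff₀' hc] at this
    exact max_eq_right (by simpa using this)
  rw [← intervalIntegral.integral_add_adjacent_intervals (hcont.intervalIntegrable 0 R)
    (hcont.intervalIntegrable R M), h_tail, add_zero, h_head, intervalIntegral.integral_sub
    intervalIntegrable_const ((continuous_rpow_const hα.le).intervalIntegrable 0 R |>.const_mul c),
    intervalIntegral.integral_const, intervalIntegral.integral_const_mul,
    integral_rpow (Or.inl (by linarith)), zero_rpow (by positivity), smul_eq_mul, sub_zero,
    sub_zero, rpow_add_one' hR (by positivity), hRα]
  have hlamR : R * lam = c ^ (-(1 / α)) * lam ^ (1 + 1 / α) := by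
    rw [hR_def, div_rpow hlam.le hc.le, rpow_add hlam, rpow_one, rpow_neg hc.le]
    field_simp
  rw [mul_assoc, ← hlamR]
  field_simp
  ring

lemma tendsto_mul_rpow_add_one (hα : 0 < α) (hc : 0 < c) :
    Tendsto (fun n : ℕ => c * ((n : ℝ) + 1) ^ α) atTop atTop :=
  ((tendsto_rpow_atTop hα).comp
    (tendsto_atTop_add_const_right _ 1 tendsto_natCast_atTop_atTop)).const_mul_atTop hc

lemma rieszSum_mul_rpow_eq_sum (hα : 0 < α) (hc : 0 < c) (hlam : 0 ≤ lam) {M : ℕ}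
    (hM : (lam / c) ^ (1 / α) ≤ M) :
    rieszSum (fun n => c * ((n : ℝ) + 1) ^ α) lam
      = ∑ n ∈ range M, max 0 (lam - c * ((n : ℝ) + 1) ^ α) :=
  tsum_eq_sum fun n hn => max_zero_sub_mul_rpow_eq_zero hα hc hlam <|
    hM.trans (by simp only [mem_range, not_lt] at hn; exact_mod_cast hn.trans n.le_succ)

lemma rieszSum_mul_rpow_le (hα : 0 < α) (hc : 0 < c) (hlam : 0 < lam) :
    rieszSum (fun n => c * ((n : ℝ) + 1) ^ α) lam
      ≤ α / (1 + α) * c ^ (-(1 / α)) * lam ^ (1 + 1 / α) := by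
  have hM := Nat.le_ceil ((lam / c) ^ (1 / α))
  have hsum := ((antitoneOn_max_zero_sub_mul_rpow (lam := lam) hα.le hc.le).mono
    Set.Icc_subset_Ici_self).sum_le_integral (x₀ := 0) (a := ⌈(lam / c) ^ (1 / α)⌉₊)
  rw [zero_add, integral_max_zero_sub_mul_rpow hα hc hlam hM] at hsum
  rw [rieszSum_mul_rpow_eq_sum hα hc hlam.le hM]
  simpa using hsum

lemma le_rieszSum_mul_rpow_add (hα : 0 < α) (hc : 0 < c) (hlam : 0 < lam) :
    α / (1 + α) * c ^ (-(1 / α)) * lam ^ (1 + 1 / α)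
      ≤ rieszSum (fun n => c * ((n : ℝ) + 1) ^ α) lam + lam := by
  have hM := Nat.le_ceil ((lam / c) ^ (1 / α))
  have hM' : (lam / c) ^ (1 / α) ≤ ((⌈(lam / c) ^ (1 / α)⌉₊ + 1 : ℕ) : ℝ) := by
    push_cast; linarith
  have hsum := ((antitoneOn_max_zero_sub_mul_rpow (lam := lam) hα.le hc.le).mono
    Set.Icc_subset_Ici_self).integral_le_sum (x₀ := 0) (a := ⌈(lam / c) ^ (1 / α)⌉₊ + 1)
  rw [zero_add, integral_max_zero_sub_mul_rpow hα hc hlam hM', sum_range_succ'] at hsum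
  rw [rieszSum_mul_rpow_eq_sum hα hc hlam.le hM]
  simpa [zero_rpow hα.ne', hlam.le] using hsum

end ModelSum

lemma summable_max_zero_sub {u : ℕ → ℝ} (hu : Tendsto u atTop atTop) (lam : ℝ) :
    Summable fun n => max 0 (lam - u n) := by
  have h : ∀ᶠ n in cofinite, max 0 (lam - u n) = 0 := by
    rw [Nat.cofinite_eq_atTop]
    filter_upwards [hu.eventually_ge_atTop lam] with n hn using max_eq_left (by linarith)
  exact summable_of_hasFiniteSupport h

lemma tsum_le_tsum_add_sum_range {f g : ℕ → ℝ} (hf : Summable f) (hg : Summable g) (hg0 : 0 ≤ g)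
    {N : ℕ} (hfg : ∀ n ≥ N, f n ≤ g n) : ∑' n, f n ≤ ∑' n, g n + ∑ n ∈ range N, f n := by
  rw [← hf.sum_add_tsum_nat_add N, ← hg.sum_add_tsum_nat_add N]
  have h_tail : ∑' n, f (n + N) ≤ ∑' n, g (n + N) :=
    ((summable_nat_add_iff N).2 hf).tsum_le_tsum (fun n => hfg _ (N.le_add_left n))
      ((summable_nat_add_iff N).2 hg)
  have h_head : 0 ≤ ∑ n ∈ range N, g n := sum_nonneg fun n _ => hg0 n
  linarith

lemma rieszSum_le_rieszSum_add {u v : ℕ → ℝ} (hv : Tendsto v atTop atTop) {N : ℕ}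
    (hvu : ∀ n ≥ N, v n ≤ u n) (lam : ℝ) :
    rieszSum u lam ≤ rieszSum v lam + ∑ n ∈ range N, max 0 (lam - u n) :=
  tsum_le_tsum_add_sum_range
    (summable_max_zero_sub (tendsto_atTop_mono' _ (eventually_atTop.2 ⟨N, hvu⟩) hv) lam)
    (summable_max_zero_sub hv lam) (fun _ => le_max_left _ _)
    fun n hn => max_le_max le_rfl (sub_le_sub_left (hvu n hn) _)

lemma isLittleO_id_rpow_atTop {p : ℝ} (hp : 1 < p) :
    (fun x : ℝ => x) =o[atTop] fun x => x ^ p := by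
  have h : (fun x : ℝ => x ^ (1 : ℝ)) =o[atTop] fun x => x ^ p := by
    refine (isLittleO_iff_tendsto' ?_).2 ?_
    · filter_upwards [eventually_gt_atTop 0] with x hx h
      exact absurd h (rpow_pos_of_pos hx p).ne'
    · refine (tendsto_rpow_neg_atTop (sub_pos.2 hp)).congr' ?_
      filter_upwards [eventually_gt_atTop 0] with x hx
      rw [← rpow_sub hx, neg_sub]
  simpa using h

lemma max_zero_sub_isBigO_id (b : ℝ) :
    (fun lam : ℝ => max 0 (lam - b)) =O[atTop] fun lam => lam := by
  refine IsBigO.of_bound 2 ?_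
  filter_upwards [eventually_ge_atTop |b|] with lam h
  rw [norm_of_nonneg (le_max_left _ _), norm_of_nonneg ((abs_nonneg b).trans h)]
  exact max_le (by linarith [abs_nonneg b]) (by linarith [neg_abs_le b])

lemma sum_range_max_zero_sub_isLittleO (u : ℕ → ℝ) (N : ℕ) {p : ℝ} (hp : 1 < p) :
    (fun lam : ℝ => ∑ n ∈ range N, max 0 (lam - u n)) =o[atTop] fun lam => lam ^ p := by
  have := IsLittleO.sum (s := range N) fun n _ =>
    (max_zero_sub_isBigO_id (u n)).trans_isLittleO (isLittleO_id_rpow_atTop hp)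
  simpa [Finset.sum_fn] using this

lemma isLittleO_sub_mul_of_forall_lt {ι : Type*} {l : Filter ι} {f Φ : ι → ℝ} {L : ℝ}
    (hΦ : ∀ᶠ x in l, 0 ≤ Φ x) (hup : ∀ L' > L, ∀ᶠ x in l, f x ≤ L' * Φ x)
    (hlo : ∀ L' < L, ∀ᶠ x in l, L' * Φ x ≤ f x) : (fun x => f x - L * Φ x) =o[l] Φ := by
  refine isLittleO_iff.2 fun ε hε => ?_
  filter_upwards [hΦ, hup (L + ε) (by linarith), hlo (L - ε) (by linarith)] with x hΦx hup hlo
  rw [norm_of_nonneg hΦx, Real.norm_eq_abs, abs_le]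
  constructor <;> linarith

lemma Asymptotics.IsLittleO.eventually_mul_le {ι : Type*} {l : Filter ι} {u v : ι → ℝ} {C c : ℝ}
    (h : (fun x => u x - C * v x) =o[l] v) (hv : ∀ᶠ x in l, 0 ≤ v x) (hc : c < C) :
    ∀ᶠ x in l, c * v x ≤ u x := by
  filter_upwards [h.bound (sub_pos.2 hc), hv] with x hx hvx
  rw [norm_of_nonneg hvx, Real.norm_eq_abs, abs_le] at hx
  linarith [hx.1]

lemma Asymptotics.IsLittleO.eventually_le_mul {ι : Type*} {l : Filter ι} {u v : ι → ℝ} {C c : ℝ}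
    (h : (fun x => u x - C * v x) =o[l] v) (hv : ∀ᶠ x in l, 0 ≤ v x) (hc : C < c) :
    ∀ᶠ x in l, u x ≤ c * v x := by
  filter_upwards [h.bound (sub_pos.2 hc), hv] with x hx hvx
  rw [norm_of_nonneg hvx, Real.norm_eq_abs, abs_le] at hx
  linarith [hx.2]

section Asymptotics

variable {α c L : ℝ}

lemma eventually_rieszSum_le (hα : 0 < α) (hc : 0 < c) {u : ℕ → ℝ}
    (hu : ∀ᶠ n : ℕ in atTop, c * ((n : ℝ) + 1) ^ α ≤ u n)
    (hL : α / (1 + α) * c ^ (-(1 / α)) < L) :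
    ∀ᶠ lam in atTop, rieszSum u lam ≤ L * lam ^ (1 + 1 / α) := by
  obtain ⟨N, hN⟩ := eventually_atTop.1 hu
  have hE := (sum_range_max_zero_sub_isLittleO u N (p := 1 + 1 / α)
    (by simp [hα])).bound (sub_pos.2 hL)
  filter_upwards [hE, eventually_gt_atTop 0] with lam hE hlam
  have hΦ : 0 ≤ lam ^ (1 + 1 / α) := by positivity
  rw [norm_of_nonneg hΦ] at hE
  have h_cmp := rieszSum_le_rieszSum_add (tendsto_mul_rpow_add_one hα hc) hN lam
  have h_model := rieszSum_mul_rpow_le hα hc hlam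
  linarith [le_norm_self (∑ n ∈ range N, max 0 (lam - u n))]

lemma eventually_le_rieszSum (hα : 0 < α) (hc : 0 < c) {u : ℕ → ℝ}
    (hu_top : Tendsto u atTop atTop) (hu : ∀ᶠ n : ℕ in atTop, u n ≤ c * ((n : ℝ) + 1) ^ α)
    (hL : L < α / (1 + α) * c ^ (-(1 / α))) :
    ∀ᶠ lam in atTop, L * lam ^ (1 + 1 / α) ≤ rieszSum u lam := by
  obtain ⟨N, hN⟩ := eventually_atTop.1 hu
  have hE := ((isLittleO_id_rpow_atTop (p := 1 + 1 / α) (by simp [hα])).add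
    (sum_range_max_zero_sub_isLittleO (fun n => c * ((n : ℝ) + 1) ^ α) N (by simp [hα]))).bound
    (sub_pos.2 hL)
  filter_upwards [hE, eventually_gt_atTop 0] with lam hE hlam
  have hΦ : 0 ≤ lam ^ (1 + 1 / α) := by positivity
  rw [norm_of_nonneg hΦ] at hE
  have h_cmp := rieszSum_le_rieszSum_add hu_top hN lam
  have h_model := le_rieszSum_mul_rpow_add hα hc hlam
  linarith [le_norm_self (lam + ∑ n ∈ range N, max 0 (lam - c * ((n : ℝ) + 1) ^ α))]

end Asymptotics

theorem stmt_2_general (a : ℕ → ℝ) (α C : ℝ) (hα : 0 < α) (hC : 0 < C)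
    (haAsym : (fun n : ℕ => a n - C * (n : ℝ) ^ α) =o[atTop] fun n : ℕ => (n : ℝ) ^ α) :
    (fun lam : ℝ =>
        (∑' n : ℕ, max 0 (lam - a (n + 1)))
          - α / (1 + α) * C ^ (-(1 / α)) * lam ^ (1 + 1 / α))
      =o[atTop] fun lam : ℝ => lam ^ (1 + 1 / α) := by
  have hu : (fun n : ℕ => a (n + 1) - C * ((n : ℝ) + 1) ^ α)
      =o[atTop] fun n => ((n : ℝ) + 1) ^ α := by
    simpa [Function.comp_def] using haAsym.comp_tendsto (tendsto_add_atTop_nat 1)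
  have hpow : ∀ᶠ n : ℕ in atTop, 0 ≤ ((n : ℝ) + 1) ^ α := .of_forall fun n => by positivity
  have hK : ContinuousAt (fun c => α / (1 + α) * c ^ (-(1 / α))) C :=
    continuousAt_const.mul (continuousAt_rpow_const _ _ (.inl hC.ne'))
  refine isLittleO_sub_mul_of_forall_lt (f := rieszSum fun n => a (n + 1))
    ((eventually_ge_atTop 0).mono fun lam h => rpow_nonneg h _) (fun L hL => ?_) (fun L hL => ?_)
  · obtain ⟨c, hcL, hc, hcC⟩ := (((hK.eventually (gt_mem_nhds hL)).filter_mono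
      nhdsWithin_le_nhds).and (Ioo_mem_nhdsLT hC)).exists
    exact eventually_rieszSum_le hα hc (hu.eventually_mul_le hpow hcC) hcL
  · obtain ⟨c, hcL, hCc, -⟩ := (((hK.eventually (lt_mem_nhds hL)).filter_mono
      nhdsWithin_le_nhds).and (Ioo_mem_nhdsGT (lt_add_one C))).exists
    have hu_top : Tendsto (fun n => a (n + 1)) atTop atTop :=
      tendsto_atTop_mono' _ (hu.eventually_mul_le hpow (half_lt_self hC))
        (tendsto_mul_rpow_add_one hα (half_pos hC))
    exact eventually_le_rieszSum hα (hC.trans hCc) hu_top (hu.eventually_le_mul hpow hCc) hcL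

theorem stmt_2 (a : ℕ → ℝ) (ha : Monotone a) (α C : ℝ) (hα : 0 < α) (hC : 0 < C)
    (haAsym : (fun n : ℕ => a n - C * (n : ℝ) ^ α) =o[atTop] fun n : ℕ => (n : ℝ) ^ α) :
    (fun lam : ℝ =>
        (∑' n : ℕ, max 0 (lam - a (n + 1)))
          - α / (1 + α) * C ^ (-(1 / α)) * lam ^ (1 + 1 / α))
      =o[atTop] fun lam : ℝ => lam ^ (1 + 1 / α) :=
  stmt_2_general a α C hα hC haAsym
end

section
/- Let $\gamma_0>0$ and suppose $F:(0,\infty)\to\mathbb{R}$ is given by $F(\lambda) = \sum_{n\ge1}(\lambda-\lambda_n)_+^{\gamma_0}$ for a nondecreasing sequence $\lambda_n\to\infty$, and that $F(\lambda) = A\lambda^{\gamma_0+\frac d2} + B\lambda^{\gamma_0+\frac{d-1}{2}}+o(\lambda^{\gamma_0+\frac{d-1}{2}})$ as $\lambda\to\infty$ for constants $A,B$ and $d\ge1$. Then for every $\gamma>\gamma_0$ the Riesz mean $F_\gamma(\lambda):=\sum_{n\ge1}(\lambda-\lambda_n)_+^{\gamma}$ satisfies $F_\gamma(\lambda) = \frac{\Gamma(\gamma+1)\Gamma(\gamma_0+\frac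 d2+1)}{\Gamma(\gamma_0+1)\Gamma(\gamma+\frac d2+1)}A\lambda^{\gamma+\frac d2} + \frac{\Gamma(\gamma+1)\Gamma(\gamma_0+\frac{d-1}{2}+1)}{\Gamma(\gamma_0+1)\Gamma(\gamma+\frac{d-1}{2}+1)}B\lambda^{\gamma+\frac{d-1}{2}}+o(\lambda^{\gamma+\frac{d-1}{2}})$. -/
/-
With `I^a f (x) = Γ(a)⁻¹ ∫₀^∞ τ^(a-1) f (x - τ) dτ` (the Riemann–Liouville integral), a Beta
integral gives `I^a (x₊^p) = Γ(p+1) / Γ(p+a+1) · x₊^(p+a)`. Hence for `a = γ - γ₀` the operator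
`I^a` maps the Riesz mean of order `γ₀` to `Γ(γ₀+1) / Γ(γ+1)` times the Riesz mean of order `γ`,
and each term `x^p` of the expansion to the corresponding term with the stated Gamma ratio. The
remainder `r` is continuous, vanishes below `inf e`, and is `o(x^q)`; beyond a large `T` it is at
most `ε x^q`, which lifts to `ε · O(x^(q+a))`, while on the compact rest it is bounded and
contributes only a lower power of `x`. So `I^a r = o(x^(q+a))`.
-/

open Filter Real MeasureTheory Set Asymptotics

noncomputable def posRpow (p x : ℝ) : ℝ := max 0 x ^ p

section posRpow

variable {p x : ℝ}

lemma posRpow_nonneg (p x : ℝ) : 0 ≤ posRpow p x := rpow_nonneg (le_max_left _ _) _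

lemma posRpow_of_nonpos (hp : 0 < p) (hx : x ≤ 0) : posRpow p x = 0 := by
  rw [posRpow, max_eq_left hx, zero_rpow hp.ne']

lemma posRpow_of_nonneg (hx : 0 ≤ x) : posRpow p x = x ^ p := by
  rw [posRpow, max_eq_right hx]

lemma continuous_posRpow (hp : 0 ≤ p) : Continuous (posRpow p) :=
  (continuous_rpow_const hp).comp (continuous_const.max continuous_id)

end posRpow

theorem integral_rpow_mul_sub_rpow {a b x : ℝ} (ha : 0 < a) (hb : 0 < b) (hx : 0 < x) :
    ∫ τ in 0..x, τ ^ (a - 1) * (x - τ) ^ (b - 1) =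
      Gamma a * Gamma b / Gamma (a + b) * x ^ (a + b - 1) := by
  have key := Complex.betaIntegral_scaled a b hx
  rw [Complex.betaIntegral_eq_Gamma_mul_div _ _ (by simpa) (by simpa)] at key
  apply Complex.ofReal_injective
  rw [← intervalIntegral.integral_ofReal]
  convert key using 1
  · refine intervalIntegral.integral_congr fun τ hτ => ?_
    rw [uIcc_of_le hx.le] at hτ
    push_cast
    rw [Complex.ofReal_cpow hτ.1, Complex.ofReal_cpow (sub_nonneg.2 hτ.2)]
    push_cast; ring_nf
  · rw [← Complex.ofReal_add, Complex.Gamma_ofReal, Complex.Gamma_ofReal, Complex.Gamma_ofReal,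
      ← Complex.ofReal_one, ← Complex.ofReal_sub, ← Complex.ofReal_cpow hx.le]
    push_cast; ring

noncomputable def riemannLiouville (a : ℝ) (f : ℝ → ℝ) (x : ℝ) : ℝ :=
  (Gamma a)⁻¹ * ∫ τ in Ioi 0, τ ^ (a - 1) * f (x - τ)

section riemannLiouville

variable {a m : ℝ} {f g : ℝ → ℝ}

lemma integrableOn_rpow_mul_comp_sub (ha : 0 < a) (hf : Continuous f)
    (hfm : ∀ y ≤ m, f y = 0) (x : ℝ) :
    IntegrableOn (fun τ => τ ^ (a - 1) * f (x - τ)) (Ioi 0) := by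
  have hker : IntegrableOn (fun τ : ℝ => τ ^ (a - 1)) (Icc 0 (x - m)) := by
    rw [integrableOn_Icc_iff_integrableOn_Ioc]
    exact (intervalIntegral.intervalIntegrable_rpow' (by linarith)).1
  refine (hker.mul_continuousOn (hf.comp (continuous_const.sub continuous_id)).continuousOn
    isCompact_Icc).of_forall_sdiff_eq_zero measurableSet_Ioi fun τ ⟨hτ, hτm⟩ => ?_
  have hle : x - τ ≤ m := by
    by_contra! hlt
    exact hτm ⟨le_of_lt hτ, by linarith⟩
  show τ ^ (a - 1) * f (x - τ) = 0
  rw [hfm _ hle, mul_zero]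

lemma riemannLiouville_add (ha : 0 < a) (hf : Continuous f) (hfm : ∀ y ≤ m, f y = 0)
    (hg : Continuous g) (hgm : ∀ y ≤ m, g y = 0) (x : ℝ) :
    riemannLiouville a (fun y => f y + g y) x =
      riemannLiouville a f x + riemannLiouville a g x := by
  simp only [riemannLiouville, mul_add]
  rw [integral_add (integrableOn_rpow_mul_comp_sub ha hf hfm x)
    (integrableOn_rpow_mul_comp_sub ha hg hgm x), mul_add]

lemma riemannLiouville_sub (ha : 0 < a) (hf : Continuous f) (hfm : ∀ y ≤ m, f y = 0)
    (hg : Continuous g) (hgm : ∀ y ≤ m, g y = 0) (x : ℝ) :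
    riemannLiouville a (fun y => f y - g y) x =
      riemannLiouville a f x - riemannLiouville a g x := by
  simp only [riemannLiouville, mul_sub]
  rw [integral_sub (integrableOn_rpow_mul_comp_sub ha hf hfm x)
    (integrableOn_rpow_mul_comp_sub ha hg hgm x), mul_sub]

lemma riemannLiouville_const_mul (c x : ℝ) :
    riemannLiouville a (fun y => c * f y) x = c * riemannLiouville a f x := by
  simp only [riemannLiouville, mul_left_comm _ c, integral_const_mul]

lemma riemannLiouville_comp_sub_const (c x : ℝ) :
    riemannLiouville a (fun y => f (y - c)) x = riemannLiouville a f (x - c) := by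
  simp only [riemannLiouville, sub_right_comm]

lemma abs_riemannLiouville_le (ha : 0 < a) (hg : Continuous g) (hgm : ∀ y ≤ m, g y = 0)
    (hfg : ∀ y, |f y| ≤ g y) (x : ℝ) :
    |riemannLiouville a f x| ≤ riemannLiouville a g x := by
  rw [riemannLiouville, riemannLiouville, abs_mul, abs_of_pos (inv_pos.2 (Gamma_pos_of_pos ha))]
  refine mul_le_mul_of_nonneg_left ?_ (inv_nonneg.2 (Gamma_pos_of_pos ha).le)
  rw [← Real.norm_eq_abs]
  refine norm_integral_le_of_norm_le (integrableOn_rpow_mul_comp_sub ha hg hgm x)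
    ((ae_restrict_iff' measurableSet_Ioi).2 (Eventually.of_forall fun τ (hτ : 0 < τ) => ?_))
  rw [norm_mul, Real.norm_of_nonneg (rpow_nonneg hτ.le _)]
  exact mul_le_mul_of_nonneg_left (hfg _) (rpow_nonneg hτ.le _)

lemma riemannLiouville_posRpow (ha : 0 < a) {p : ℝ} (hp : 0 < p) (x : ℝ) :
    riemannLiouville a (posRpow p) x =
      Gamma (p + 1) / Gamma (p + a + 1) * posRpow (p + a) x := by
  rcases le_or_gt x 0 with hx | hx
  · rw [posRpow_of_nonpos (by linarith) hx, riemannLiouville,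
      setIntegral_eq_zero_of_forall_eq_zero fun τ (hτ : τ ∈ Ioi 0) => by
        rw [posRpow_of_nonpos hp (by linarith [mem_Ioi.1 hτ]), mul_zero]]
    simp
  have hvanish : ∀ τ ∈ Ioi 0 \ Ioc 0 x, τ ^ (a - 1) * posRpow p (x - τ) = 0 := by
    intro τ ⟨hτ, hτx⟩
    have : x < τ := by by_contra! h; exact hτx ⟨hτ, h⟩
    rw [posRpow_of_nonpos hp (by linarith), mul_zero]
  have hpow : EqOn (fun τ => τ ^ (a - 1) * posRpow p (x - τ))
      (fun τ => τ ^ (a - 1) * (x - τ) ^ (p + 1 - 1)) (uIcc 0 x) := by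
    intro τ hτ
    rw [uIcc_of_le hx.le] at hτ
    simp only [posRpow_of_nonneg (sub_nonneg.2 hτ.2), add_sub_cancel_right]
  rw [riemannLiouville, setIntegral_eq_of_subset_of_forall_sdiff_eq_zero measurableSet_Ioi
      Ioc_subset_Ioi_self hvanish, ← intervalIntegral.integral_of_le hx.le,
    intervalIntegral.integral_congr hpow, integral_rpow_mul_sub_rpow ha (by linarith) hx,
    posRpow_of_nonneg hx.le]
  have := (Gamma_pos_of_pos ha).ne'
  field_simp
  ring_nf

lemma isLittleO_posRpow_sub {r q : ℝ} (hr : 0 ≤ r) (hrq : r < q) (c : ℝ) :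
    (fun x => posRpow r (x - c)) =o[atTop] (· ^ q) := by
  have hbig : (fun x => posRpow r (x - c)) =O[atTop] (· ^ r) := by
    refine IsBigO.of_bound (2 ^ r) ?_
    filter_upwards [eventually_ge_atTop |c|] with x hx
    have hx0 : 0 ≤ x := (abs_nonneg c).trans hx
    rw [Real.norm_of_nonneg (posRpow_nonneg _ _), Real.norm_of_nonneg (rpow_nonneg hx0 _),
      ← mul_rpow zero_le_two hx0, posRpow]
    exact rpow_le_rpow (le_max_left _ _) (max_le (by positivity) (by linarith [neg_abs_le c])) hr
  refine hbig.trans_isLittleO ((isLittleO_iff_tendsto' ?_).2 ?_)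
  · filter_upwards [eventually_gt_atTop 0] with x hx h
    exact absurd h (rpow_pos_of_pos hx q).ne'
  · refine (tendsto_rpow_neg_atTop (sub_pos.2 hrq)).congr' ?_
    filter_upwards [eventually_gt_atTop 0] with x hx
    rw [← rpow_sub hx, neg_sub]

lemma exists_abs_le_posRpow_add_posRpow {q r ε : ℝ} (hf : Continuous f)
    (hfm : ∀ y ≤ m, f y = 0) (hr : 0 ≤ r) (hε : 0 ≤ ε)
    (hfε : ∀ᶠ y in atTop, ‖f y‖ ≤ ε * ‖y ^ q‖) :
    ∃ M, 0 ≤ M ∧ ∀ y, |f y| ≤ ε * posRpow q y + M * posRpow r (y - (m - 1)) := by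
  obtain ⟨T, hT⟩ := eventually_atTop.1 (hfε.and (eventually_ge_atTop 0))
  obtain ⟨M, hM⟩ := isCompact_Icc.exists_bound_of_continuousOn (s := Icc m T) hf.continuousOn
  refine ⟨|M|, abs_nonneg M, fun y => ?_⟩
  have hεy := mul_nonneg hε (posRpow_nonneg q y)
  have hMy := mul_nonneg (abs_nonneg M) (posRpow_nonneg r (y - (m - 1)))
  rcases le_or_gt y m with hym | hym
  · rw [hfm y hym, abs_zero]
    exact add_nonneg hεy hMy
  rcases le_or_gt T y with hTy | hTy
  · obtain ⟨hfy, hy₀⟩ := hT y hTy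
    rw [Real.norm_eq_abs, Real.norm_of_nonneg (rpow_nonneg hy₀ _),
      ← posRpow_of_nonneg hy₀] at hfy
    exact hfy.trans (le_add_of_nonneg_right hMy)
  · have hfM : |f y| ≤ |M| := (hM y ⟨hym.le, hTy.le⟩).trans (le_abs_self M)
    have hone : 1 ≤ posRpow r (y - (m - 1)) := by
      rw [posRpow_of_nonneg (by linarith)]
      exact one_le_rpow (by linarith) hr
    nlinarith [abs_nonneg M]

theorem riemannLiouville_isLittleO {q : ℝ} (ha : 0 < a) (hq : 0 < q) (hf : Continuous f)
    (hfm : ∀ y ≤ m, f y = 0) (hfo : f =o[atTop] (· ^ q)) :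
    riemannLiouville a f =o[atTop] (· ^ (q + a)) := by
  refine isLittleO_iff.2 fun c hc => ?_
  set κ := Gamma (q + 1) / Gamma (q + a + 1)
  have hκ : 0 < κ := div_pos (Gamma_pos_of_pos (by linarith)) (Gamma_pos_of_pos (by linarith))
  set ε := c / (2 * κ)
  have hεκ : ε * κ = c / 2 := by simp only [ε]; field_simp
  -- Bounding `f` on the compact part by `M (y - m + 1)^(q/2)` instead of a constant keeps the
  -- majorant continuous, and its lift `≍ x^(q/2 + a)` is still `o(x^(q + a))`.
  obtain ⟨M, hM, hfg⟩ := exists_abs_le_posRpow_add_posRpow hf hfm (half_pos hq).le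
    (by positivity) (hfo.def (by positivity : 0 < ε))
  have hg₁ : Continuous fun y => ε * posRpow q y := (continuous_posRpow hq.le).const_mul ε
  have hg₂ : Continuous fun y => M * posRpow (q / 2) (y - (m - 1)) :=
    ((continuous_posRpow (half_pos hq).le).comp (continuous_sub_right _)).const_mul _
  have hg₁m : ∀ y ≤ min 0 (m - 1), ε * posRpow q y = 0 := fun y hy => by
    rw [posRpow_of_nonpos hq (hy.trans (min_le_left _ _)), mul_zero]
  have hg₂m : ∀ y ≤ min 0 (m - 1), M * posRpow (q / 2) (y - (m - 1)) = 0 := fun y hy => by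
    rw [posRpow_of_nonpos (half_pos hq) (sub_nonpos.2 (hy.trans (min_le_right _ _))), mul_zero]
  set g := fun y => ε * posRpow q y + M * posRpow (q / 2) (y - (m - 1))
  have hgm : ∀ y ≤ min 0 (m - 1), g y = 0 := fun y hy => by
    simp only [g, hg₁m y hy, hg₂m y hy, add_zero]
  set K := M * (Gamma (q / 2 + 1) / Gamma (q / 2 + a + 1))
  have hrl_g : ∀ x, riemannLiouville a g x =
      c / 2 * posRpow (q + a) x + K * posRpow (q / 2 + a) (x - (m - 1)) := fun x => by
    rw [riemannLiouville_add ha hg₁ hg₁m hg₂ hg₂m, riemannLiouville_const_mul,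
      riemannLiouville_const_mul, riemannLiouville_comp_sub_const,
      riemannLiouville_posRpow ha hq, riemannLiouville_posRpow ha (half_pos hq), ← hεκ]
    ring
  have hsmall := (isLittleO_posRpow_sub (by linarith) (by linarith : q / 2 + a < q + a)
    (m - 1)).const_mul_left K
  filter_upwards [isLittleO_iff.1 hsmall (half_pos hc), eventually_ge_atTop 0] with x hsm hx
  rw [Real.norm_of_nonneg (rpow_nonneg hx _)] at hsm ⊢
  calc ‖riemannLiouville a f x‖ ≤ riemannLiouville a g x :=
        abs_riemannLiouville_le ha (hg₁.add hg₂) hgm hfg x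
    _ ≤ c / 2 * x ^ (q + a) + c / 2 * x ^ (q + a) := by
        rw [hrl_g, posRpow_of_nonneg hx]
        exact add_le_add le_rfl ((le_abs_self _).trans hsm)
    _ = c * x ^ (q + a) := by ring

end riemannLiouville

noncomputable def rieszMean (e : ℕ → ℝ) (p x : ℝ) : ℝ := ∑' n, posRpow p (x - e n)

section rieszMean

variable {e : ℕ → ℝ} {a p x : ℝ}

lemma rieszMean_eq_sum (hp : 0 < p) {N : ℕ} (hN : ∀ n ≥ N, x ≤ e n) {y : ℝ}
    (hy : y ≤ x) :
    rieszMean e p y = ∑ n ∈ Finset.range N, posRpow p (y - e n) :=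
  tsum_eq_sum fun n hn => posRpow_of_nonpos hp (by linarith [hN n (by simpa using hn)])

lemma rieszMean_of_le {m : ℝ} (hp : 0 < p) (hm : ∀ n, m ≤ e n) (hx : x ≤ m) :
    rieszMean e p x = 0 :=
  (tsum_congr fun n => posRpow_of_nonpos hp (by linarith [hm n])).trans tsum_zero

lemma continuous_rieszMean (he : Tendsto e atTop atTop) (hp : 0 < p) :
    Continuous (rieszMean e p) := by
  refine continuous_iff_continuousAt.2 fun x => ?_
  obtain ⟨N, hN⟩ := eventually_atTop.1 (he.eventually_ge_atTop (x + 1))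
  refine (continuous_finsetSum (Finset.range N) fun n _ => (continuous_posRpow hp.le).comp
    (continuous_sub_right (e n))).continuousAt.congr_of_eventuallyEq ?_
  filter_upwards [Iic_mem_nhds (lt_add_one x)] with y hy using rieszMean_eq_sum hp hN hy

lemma riemannLiouville_rieszMean (he : Tendsto e atTop atTop) (ha : 0 < a) (hp : 0 < p)
    (x : ℝ) :
    riemannLiouville a (rieszMean e p) x =
      Gamma (p + 1) / Gamma (p + a + 1) * rieszMean e (p + a) x := by
  obtain ⟨N, hN⟩ := eventually_atTop.1 (he.eventually_ge_atTop x)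
  have hint : ∀ n ∈ Finset.range N,
      IntegrableOn (fun τ => τ ^ (a - 1) * posRpow p (x - e n - τ)) (Ioi 0) := fun n _ =>
    integrableOn_rpow_mul_comp_sub ha (continuous_posRpow hp.le)
      (fun _ hy => posRpow_of_nonpos hp hy) _
  calc riemannLiouville a (rieszMean e p) x
      = (Gamma a)⁻¹ * ∫ τ in Ioi 0,
          ∑ n ∈ Finset.range N, τ ^ (a - 1) * posRpow p (x - e n - τ) := by
        rw [riemannLiouville]
        congr 1
        refine setIntegral_congr_fun measurableSet_Ioi fun τ (hτ : 0 < τ) => ?_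
        rw [rieszMean_eq_sum hp hN (by linarith), Finset.mul_sum]
        simp only [sub_right_comm]
    _ = ∑ n ∈ Finset.range N, riemannLiouville a (posRpow p) (x - e n) := by
        rw [integral_finsetSum _ hint, Finset.mul_sum]
        rfl
    _ = _ := by
        simp only [riemannLiouville_posRpow ha hp, ← Finset.mul_sum,
          rieszMean_eq_sum (add_pos hp ha) hN le_rfl]

end rieszMean

theorem rieszMean_isLittleO_of_isLittleO {e : ℕ → ℝ} (he : Tendsto e atTop atTop)
    {γ₀ γ p q A B : ℝ} (hγ₀ : 0 < γ₀) (hγ : γ₀ < γ) (hp : 0 < p) (hq : 0 < q)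
    (hF : (fun x => rieszMean e γ₀ x - A * x ^ p - B * x ^ q) =o[atTop] (· ^ q)) :
    (fun x => rieszMean e γ x
        - Gamma (γ + 1) * Gamma (p + 1) / (Gamma (γ₀ + 1) * Gamma (p + (γ - γ₀) + 1)) * A
          * x ^ (p + (γ - γ₀))
        - Gamma (γ + 1) * Gamma (q + 1) / (Gamma (γ₀ + 1) * Gamma (q + (γ - γ₀) + 1)) * B
          * x ^ (q + (γ - γ₀)))
      =o[atTop] (· ^ (q + (γ - γ₀))) := by
  obtain ⟨m, hm⟩ := bddBelow_range_of_tendsto_atTop_atTop he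
  have ha : 0 < γ - γ₀ := sub_pos.2 hγ
  have hFm : ∀ y ≤ min m 0, rieszMean e γ₀ y = 0 := fun y hy =>
    rieszMean_of_le hγ₀ (fun n => hm ⟨n, rfl⟩) (hy.trans (min_le_left _ _))
  have hPm : ∀ {r}, 0 < r → ∀ y ≤ min m 0, posRpow r y = 0 := fun hr y hy =>
    posRpow_of_nonpos hr (hy.trans (min_le_right _ _))
  have hFc := continuous_rieszMean he hγ₀
  have hPc := (continuous_posRpow hp.le).const_mul A
  have hQc := (continuous_posRpow hq.le).const_mul B
  set G := fun y => rieszMean e γ₀ y - A * posRpow p y - B * posRpow q y with hG_def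
  have hFPc : Continuous fun y => rieszMean e γ₀ y - A * posRpow p y := hFc.sub hPc
  have hGc : Continuous G := hFPc.sub hQc
  have hGm : ∀ y ≤ min m 0, G y = 0 := fun y hy => by
    simp only [G, hFm y hy, hPm hp y hy, hPm hq y hy]; ring
  have hG : G =o[atTop] (· ^ q) := hF.congr' (by
    filter_upwards [eventually_ge_atTop 0] with x hx
    simp only [G, posRpow_of_nonneg hx]) EventuallyEq.rfl
  have hlift : ∀ x, riemannLiouville (γ - γ₀) G x =
      Gamma (γ₀ + 1) / Gamma (γ + 1) * rieszMean e γ x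
        - A * (Gamma (p + 1) / Gamma (p + (γ - γ₀) + 1) * posRpow (p + (γ - γ₀)) x)
        - B * (Gamma (q + 1) / Gamma (q + (γ - γ₀) + 1) * posRpow (q + (γ - γ₀)) x) := by
    intro x
    rw [hG_def, riemannLiouville_sub (m := min m 0) ha hFPc
      (fun y hy => by simp [hFm y hy, hPm hp y hy]) hQc
      (fun y hy => by simp [hPm hq y hy]), riemannLiouville_sub ha hFc hFm hPc
      (fun y hy => by simp [hPm hp y hy]), riemannLiouville_const_mul, riemannLiouville_const_mul,
      riemannLiouville_rieszMean he ha hγ₀, riemannLiouville_posRpow ha hp,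
      riemannLiouville_posRpow ha hq, add_sub_cancel]
  refine ((riemannLiouville_isLittleO ha hq hGc hGm hG).const_mul_left
    (Gamma (γ + 1) / Gamma (γ₀ + 1))).congr' ?_ EventuallyEq.rfl
  filter_upwards [eventually_ge_atTop 0] with x hx
  have := (Gamma_pos_of_pos (by linarith : 0 < γ₀ + 1)).ne'
  have := (Gamma_pos_of_pos (by linarith : 0 < γ + 1)).ne'
  rw [hlift, posRpow_of_nonneg hx, posRpow_of_nonneg hx]
  field_simp

theorem stmt_16_general (e : ℕ → ℝ) (heTop : Tendsto e atTop atTop)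
    (γ₀ : ℝ) (hγ₀ : 0 < γ₀) (d : ℝ) (hd : 1 ≤ d) (A B : ℝ)
    (hF : (fun lam : ℝ =>
        (∑' n : ℕ, max 0 (lam - e n) ^ γ₀)
          - A * lam ^ (γ₀ + d / 2) - B * lam ^ (γ₀ + (d - 1) / 2))
      =o[atTop] fun lam : ℝ => lam ^ (γ₀ + (d - 1) / 2)) :
    ∀ γ : ℝ, γ₀ < γ →
      (fun lam : ℝ =>
          (∑' n : ℕ, max 0 (lam - e n) ^ γ)
            - Real.Gamma (γ + 1) * Real.Gamma (γ₀ + d / 2 + 1)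
                / (Real.Gamma (γ₀ + 1) * Real.Gamma (γ + d / 2 + 1)) * A * lam ^ (γ + d / 2)
            - Real.Gamma (γ + 1) * Real.Gamma (γ₀ + (d - 1) / 2 + 1)
                / (Real.Gamma (γ₀ + 1) * Real.Gamma (γ + (d - 1) / 2 + 1)) * B
                  * lam ^ (γ + (d - 1) / 2))
        =o[atTop] fun lam : ℝ => lam ^ (γ + (d - 1) / 2) := by
  intro γ hγ
  have h := rieszMean_isLittleO_of_isLittleO heTop hγ₀ hγ (p := γ₀ + d / 2)
    (q := γ₀ + (d - 1) / 2) (by linarith) (by linarith) hF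
  rwa [show γ₀ + d / 2 + (γ - γ₀) = γ + d / 2 by ring,
    show γ₀ + (d - 1) / 2 + (γ - γ₀) = γ + (d - 1) / 2 by ring] at h

theorem stmt_16 (e : ℕ → ℝ) (he : Monotone e) (heTop : Tendsto e atTop atTop)
    (γ₀ : ℝ) (hγ₀ : 0 < γ₀) (d : ℝ) (hd : 1 ≤ d) (A B : ℝ)
    (hF : (fun lam : ℝ =>
        (∑' n : ℕ, max 0 (lam - e n) ^ γ₀)
          - A * lam ^ (γ₀ + d / 2) - B * lam ^ (γ₀ + (d - 1) / 2))
      =o[atTop] fun lam : ℝ => lam ^ (γ₀ + (d - 1) / 2)) :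
    ∀ γ : ℝ, γ₀ < γ →
      (fun lam : ℝ =>
          (∑' n : ℕ, max 0 (lam - e n) ^ γ)
            - Real.Gamma (γ + 1) * Real.Gamma (γ₀ + d / 2 + 1)
                / (Real.Gamma (γ₀ + 1) * Real.Gamma (γ + d / 2 + 1)) * A * lam ^ (γ + d / 2)
            - Real.Gamma (γ + 1) * Real.Gamma (γ₀ + (d - 1) / 2 + 1)
                / (Real.Gamma (γ₀ + 1) * Real.Gamma (γ + (d - 1) / 2 + 1)) * B
                  * lam ^ (γ + (d - 1) / 2))
        =o[atTop] fun lam : ℝ => lam ^ (γ + (d - 1) / 2) :=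
  stmt_16_general e heTop γ₀ hγ₀ d hd A B hF
end
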